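/- arXiv:1801.06244 — 3 statements merged into one kernel-verified Lean document; each statement's English description precedes it below -/
import Mathlib

section
/- If F is holomorphic on the upper half-plane and satisfies F(-1/τ) = τ²·F(τ) for all τ in the upper half-plane, and F is 1-periodic with Fourier expansion F(τ) = Σ_{n∈ℤ} a_n e^{2πinτ}, then the constant term a_0 equals 0. -/
open Complex Set
open scoped Real

/-!
If `F = ∑ aₙ e^{2πinτ}`, then `G(τ) = a₀τ + ∑_{n ≠ 0} aₙ e^{2πinτ} / (2πin)` is a primitive of `F`
with `G(τ + 1) = G(τ) + a₀`. The weight-2 relation says that `G(-1/τ) - G(τ)` has derivative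
`F(-1/τ)/τ² - F(τ) = 0`, so it is constant, and it vanishes at the fixed point `i`. At the fixed
point `ρ = e^{2πi/3}` of `τ ↦ -1/(τ + 1)` this gives `G(ρ) = G(ρ + 1) = G(ρ) + a₀`.
-/

lemma Real.exp_mul_le_exp_mul_add_exp_mul {c a x b : ℝ} (ha : a ≤ x) (hb : x ≤ b) :
    Real.exp (c * x) ≤ Real.exp (c * a) + Real.exp (c * b) := by
  rcases le_total 0 c with hc | hc
  · have := Real.exp_le_exp.2 (mul_le_mul_of_nonneg_left hb hc)
    linarith [Real.exp_pos (c * a)]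
  · have := Real.exp_le_exp.2 (mul_le_mul_of_nonpos_left ha hc)
    linarith [Real.exp_pos (c * b)]

lemma norm_div_mul_cancel_le {𝕜 : Type*} [NormedDivisionRing 𝕜] (x y : 𝕜) : ‖x / y * y‖ ≤ ‖x‖ := by
  rcases eq_or_ne y 0 with rfl | hy
  · simp
  · rw [div_mul_cancel₀ x hy]

lemma norm_cexp_two_pi_I_int_mul (n : ℤ) (z : ℂ) :
    ‖cexp (2 * π * I * n * z)‖ = Real.exp (-(2 * π * n) * z.im) := by
  rw [norm_exp]
  congr 1
  simp [mul_re, mul_im]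

lemma norm_cexp_two_pi_I_int_mul_le_add (n : ℤ) {z τ₁ τ₂ : ℂ} (h₁ : τ₁.im ≤ z.im)
    (h₂ : z.im ≤ τ₂.im) :
    ‖cexp (2 * π * I * n * z)‖ ≤ ‖cexp (2 * π * I * n * τ₁)‖ + ‖cexp (2 * π * I * n * τ₂)‖ := by
  simp only [norm_cexp_two_pi_I_int_mul]
  exact Real.exp_mul_le_exp_mul_add_exp_mul h₁ h₂

lemma cexp_two_pi_I_int_mul_add_one (n : ℤ) (z : ℂ) :
    cexp (2 * π * I * n * (z + 1)) = cexp (2 * π * I * n * z) := by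
  have hperiod : cexp (2 * π * I * n) = 1 := by
    rw [← exp_int_mul_two_pi_mul_I n]; ring_nf
  rw [mul_add, exp_add, mul_one, hperiod, mul_one]

lemma norm_div_two_pi_I_int_le (x : ℂ) (n : ℤ) : ‖x / (2 * π * I * n)‖ ≤ ‖x‖ := by
  rcases eq_or_ne n 0 with rfl | hn
  · simp
  rw [norm_div]
  refine div_le_self (norm_nonneg x) ?_
  have : (1 : ℝ) ≤ |(n : ℝ)| := by exact_mod_cast Int.one_le_abs hn
  simp only [norm_mul, norm_ofNat, norm_real, Real.norm_eq_abs, abs_of_pos Real.pi_pos, norm_I,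
    mul_one, norm_intCast]
  nlinarith [Real.pi_gt_three]

/-- A primitive of `∑ aₙ e^{2πinτ}`; the junk value `x / 0 = 0` removes the `n = 0` term of
the series, whose primitive is the linear term `a₀ τ`. -/
noncomputable def fourierPrimitive (a : ℤ → ℂ) (τ : ℂ) : ℂ :=
  a 0 * τ + ∑' n : ℤ, a n / (2 * π * I * n) * cexp (2 * π * I * n * τ)

lemma fourierPrimitive_add_one (a : ℤ → ℂ) (τ : ℂ) :
    fourierPrimitive a (τ + 1) = fourierPrimitive a τ + a 0 := by
  simp only [fourierPrimitive, cexp_two_pi_I_int_mul_add_one]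
  ring

lemma hasSum_div_two_pi_I_int_mul_mul {a : ℤ → ℂ} {s : ℂ} {τ : ℂ}
    (h : HasSum (fun n : ℤ => a n * cexp (2 * π * I * n * τ)) s) :
    HasSum (fun n : ℤ => a n / (2 * π * I * n) * (2 * π * I * n) * cexp (2 * π * I * n * τ))
      (s - a 0) := by
  refine (h.sub (hasSum_ite_eq 0 (a 0))).congr_fun fun n => ?_
  rcases eq_or_ne n 0 with rfl | hn
  · simp
  · have : (2 * π * I * n : ℂ) ≠ 0 := by simp [Real.pi_ne_zero, I_ne_zero, hn]
    rw [div_mul_cancel₀ _ this, if_neg hn, sub_zero]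

lemma hasDerivAt_fourierPrimitive {a : ℤ → ℂ}
    (ha : ∀ τ : ℂ, 0 < τ.im → Summable (fun n : ℤ => a n * cexp (2 * π * I * n * τ)))
    {τ : ℂ} (hτ : 0 < τ.im) :
    HasDerivAt (fourierPrimitive a) (∑' n : ℤ, a n * cexp (2 * π * I * n * τ)) τ := by
  set strip := im ⁻¹' Ioo (τ.im / 2) (2 * τ.im)
  have hτ_mem : τ ∈ strip := ⟨by linarith, by linarith⟩
  have hterm (n : ℤ) (z : ℂ) :
      HasDerivAt (fun z => a n / (2 * π * I * n) * cexp (2 * π * I * n * z))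
        (a n / (2 * π * I * n) * (2 * π * I * n) * cexp (2 * π * I * n * z)) z := by
    simpa [mul_comm, mul_assoc, mul_left_comm] using
      (((hasDerivAt_id z).const_mul (2 * π * I * n)).cexp).const_mul (a n / (2 * π * I * n))
  have hbound (n : ℤ) (z : ℂ) (hz : z ∈ strip) :
      ‖a n / (2 * π * I * n) * (2 * π * I * n) * cexp (2 * π * I * n * z)‖ ≤
        ‖a n * cexp (2 * π * I * n * (τ / 2))‖ + ‖a n * cexp (2 * π * I * n * (2 * τ))‖ := by
    simp only [norm_mul _ (cexp _), ← mul_add]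
    gcongr
    · exact norm_div_mul_cancel_le _ _
    · refine norm_cexp_two_pi_I_int_mul_le_add n ?_ ?_ <;> simp [hz.1.le, hz.2.le]
  have hsummable : Summable (fun n : ℤ => a n / (2 * π * I * n) * cexp (2 * π * I * n * τ)) :=
    (ha τ hτ).norm.of_norm_bounded fun n => by
      simp only [norm_mul _ (cexp _)]
      gcongr
      exact norm_div_two_pi_I_int_le _ _
  have hseries := hasDerivAt_tsum_of_isPreconnected
    (((ha _ (by simpa using half_pos hτ)).norm).add (ha _ (by simpa using hτ)).norm)
    (isOpen_Ioo.preimage continuous_im) ((convex_Ioo _ _).linear_preimage imLm).isPreconnected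
    (fun n z _ => hterm n z) hbound hτ_mem hsummable hτ_mem
  rw [(hasSum_div_two_pi_I_int_mul_mul (ha τ hτ).hasSum).tsum_eq] at hseries
  refine (((hasDerivAt_id τ).const_mul (a 0)).add hseries).congr_deriv ?_
  simp

lemma im_neg_one_div_pos {τ : ℂ} (hτ : 0 < τ.im) : 0 < (-1 / τ).im := by
  simpa [neg_div, div_eq_inv_mul] using UpperHalfPlane.im_inv_neg_coe_pos ⟨τ, hτ⟩

lemma comp_neg_one_div_eq_of_hasDerivAt {F G : ℂ → ℂ}
    (hF : ∀ τ : ℂ, 0 < τ.im → F (-1 / τ) = τ ^ 2 * F τ)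
    (hG : ∀ τ : ℂ, 0 < τ.im → HasDerivAt G (F τ) τ) {τ : ℂ} (hτ : 0 < τ.im) :
    G (-1 / τ) = G τ := by
  have hderiv (z : ℂ) (hz : 0 < z.im) : HasDerivAt (fun z => G (-1 / z) - G z) 0 z := by
    have hz0 : z ≠ 0 := fun h => by simp [h] at hz
    have hinv : HasDerivAt (fun z : ℂ => -1 / z) (z ^ 2)⁻¹ z := by
      simpa only [div_eq_mul_inv, mul_neg, neg_mul, one_mul, neg_neg] using
        (hasDerivAt_inv hz0).const_mul (-1)
    refine (((hG _ (im_neg_one_div_pos hz)).comp z hinv).sub (hG z hz)).congr_deriv ?_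
    rw [hF z hz]
    field_simp
    ring
  have hconst := (isOpen_lt continuous_const continuous_im).is_const_of_deriv_eq_zero
    (convex_halfSpace_im_gt 0).isPreconnected
    (fun z hz => (hderiv z hz).differentiableAt.differentiableWithinAt)
    (fun z hz => (hderiv z hz).deriv) (show (0:ℝ) < I.im by simp) hτ
  rw [show -1 / I = I by simp [div_I], sub_self] at hconst
  exact sub_eq_zero.mp hconst.symm

lemma eq_zero_of_comp_neg_one_div_of_add_one {G : ℂ → ℂ} {c : ℂ}
    (hS : ∀ τ : ℂ, 0 < τ.im → G (-1 / τ) = G τ) (hT : ∀ τ : ℂ, G (τ + 1) = G τ + c) : c = 0 := by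
  set ρ : ℂ := (-1 + √3 * I) / 2
  have hρ : -1 / (ρ + 1) = ρ := by
    have h3 : ((√3 : ℝ) : ℂ) ^ 2 = 3 := by exact_mod_cast Real.sq_sqrt (by norm_num : (0:ℝ) ≤ 3)
    have hne : ρ + 1 ≠ 0 := by
      intro h; have := congrArg im h; simp [ρ] at this
    rw [div_eq_iff hne]
    linear_combination (-I ^ 2 / 4) * h3 - (3 / 4 : ℂ) * I_sq
  have hρ1 : 0 < (ρ + 1).im := by simp [ρ]
  simpa [hρ] using (hS _ hρ1).trans (hT ρ)

theorem weight_two_constant_term_eq_zero_general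
    (F : ℂ → ℂ) (a : ℤ → ℂ)
    (hmod : ∀ τ : ℂ, 0 < τ.im → F (-1 / τ) = τ ^ 2 * F τ)
    (hfour : ∀ τ : ℂ, 0 < τ.im →
      HasSum (fun n : ℤ => a n * Complex.exp (2 * Real.pi * Complex.I * n * τ)) (F τ)) :
    a 0 = 0 := by
  have hprimitive (τ : ℂ) (hτ : 0 < τ.im) : HasDerivAt (fourierPrimitive a) (F τ) τ :=
    (hfour τ hτ).tsum_eq ▸ hasDerivAt_fourierPrimitive (fun τ hτ => (hfour τ hτ).summable) hτ
  exact eq_zero_of_comp_neg_one_div_of_add_one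
    (fun _ => comp_neg_one_div_eq_of_hasDerivAt hmod hprimitive) (fourierPrimitive_add_one a)

/-- The constant term of an (unrestricted) weight-2 modular form on `SL₂(ℤ)` vanishes:
if `F` is holomorphic on the upper half-plane, satisfies `F(-1/τ) = τ² F(τ)`, is
1-periodic, and has an absolutely convergent Fourier expansion `F(τ) = Σ_{n∈ℤ} aₙ e^{2πinτ}`,
then `a₀ = 0`. -/
theorem weight_two_constant_term_eq_zero
    (F : ℂ → ℂ) (a : ℤ → ℂ)
    (hol : DifferentiableOn ℂ F {τ : ℂ | 0 < τ.im})
    (hmod : ∀ τ : ℂ, 0 < τ.im → F (-1 / τ) = τ ^ 2 * F τ)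
    (hper : ∀ τ : ℂ, 0 < τ.im → F (τ + 1) = F τ)
    (hfour : ∀ τ : ℂ, 0 < τ.im →
      HasSum (fun n : ℤ => a n * Complex.exp (2 * Real.pi * Complex.I * n * τ)) (F τ)) :
    a 0 = 0 :=
  weight_two_constant_term_eq_zero_general F a hmod hfour
end

section
/- Euler's recurrence for the partition function: for n ≥ 1, p(n) = Σ_{k=1}^∞ (-1)^{k+1} [ p(n - k(3k-1)/2) + p(n - k(3k+1)/2) ], where p(m) = 0 for m < 0. -/
/-!
The generating function of `p` is `∏ i ≥ 1, (1 - X^i)⁻¹`, while by the pentagonal number theorem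
`∏ i ≥ 1, (1 - X^i) = ∑ k : ℤ, (-1)^k X^(k(3k-1)/2)`. Hence the product of the two series is `1`,
and comparing the coefficients of `X^n` for `n ≥ 1` gives the recurrence, once the terms with
index `k` and `-k` are paired up.
-/

/-- The partition function extended by `0` to negative arguments:
`partitionExt m = p(m)` for `m ≥ 0` and `0` for `m < 0`, with `p(0) = 1`. -/
noncomputable def partitionExt (m : ℤ) : ℤ :=
  if 0 ≤ m then (Fintype.card (Nat.Partition m.toNat) : ℤ) else 0

open PowerSeries PowerSeries.WithPiTopology

namespace PowerSeries

noncomputable def partitionSeries (R : Type*) [Semiring R] : R⟦X⟧ :=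
  mk fun n ↦ (Fintype.card n.Partition : R)

theorem WithPiTopology.hasProd_partitionSeries (R : Type*) [CommSemiring R] [TopologicalSpace R]
    [IsTopologicalSemiring R] [T2Space R] :
    HasProd (fun i ↦ ∑' j : ℕ, (X : R⟦X⟧) ^ ((i + 1) * j)) (partitionSeries R) := by
  simpa [partitionSeries, Nat.Partition.restricted] using
    Nat.Partition.hasProd_powerSeriesMk_card_restricted R (fun _ ↦ True)

theorem partitionSeries_mul_pentagonalSeries (R : Type*) [CommRing R] :
    partitionSeries R * pentagonalSeries R = 1 := by
  -- Any T2 topological ring structure on `R` will do; the discrete one always exists.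
  let _ : TopologicalSpace R := ⊥
  have : DiscreteTopology R := ⟨rfl⟩
  refine ((hasProd_partitionSeries R).mul (hasProd_one_sub_X_pow R)).unique ?_
  convert hasProd_one with i
  simp_rw [pow_mul]
  exact tsum_pow_mul_one_sub_of_constantCoeff_eq_zero (by simp)

end PowerSeries

theorem natAbs_le_pentagonal (k : ℤ) : k.natAbs ≤ pentagonal k := by
  have := two_mul_natCast_pentagonal k
  zify
  cases abs_cases k <;> nlinarith

theorem pentagonal_natCast (k : ℕ) : pentagonal k = k * (3 * k - 1) / 2 := by
  rcases k.eq_zero_or_pos with rfl | hk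
  · rfl
  · zify [show 1 ≤ 3 * k by omega]
    exact natCast_pentagonal k

theorem pentagonal_neg_natCast (k : ℕ) : pentagonal (-k) = k * (3 * k + 1) / 2 := by
  rw [pentagonal_neg]
  exact_mod_cast Int.toNat_natCast _

theorem partitionExt_natCast (n : ℕ) : partitionExt n = Fintype.card n.Partition := by
  simp [partitionExt]

theorem partitionExt_of_neg {m : ℤ} (hm : m < 0) : partitionExt m = 0 :=
  if_neg hm.not_ge

theorem coeff_X_pow_mul_partitionSeries (j n : ℕ) :
    coeff n (X ^ j * partitionSeries ℤ) = partitionExt (n - j) := by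
  rw [coeff_X_pow_mul', partitionSeries, coeff_mk]
  split_ifs with h
  · rw [← Nat.cast_sub h, partitionExt_natCast]
  · rw [partitionExt_of_neg (by omega)]

theorem hasSum_negOnePow_mul_partitionExt (n : ℕ) :
    HasSum (fun k : ℤ ↦ (k.negOnePow : ℤ) * partitionExt (n - pentagonal k))
      (if n = 0 then 1 else 0) := by
  have h := ((hasSum_pentagonalSeries ℤ).mul_right (partitionSeries ℤ)).map
    (coeff n) (continuous_coeff ℤ n)
  rw [mul_comm, partitionSeries_mul_pentagonalSeries, coeff_one] at h
  convert h using 2 with k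
  rw [Function.comp_apply, mul_assoc, ← map_intCast (C (R := ℤ)), coeff_C_mul,
    coeff_X_pow_mul_partitionSeries, Int.cast_id]

theorem partitionExt_eq_sum_pentagonal {n : ℕ} (hn : n ≠ 0) :
    partitionExt n = ∑ k ∈ Finset.Icc 1 n, (-1 : ℤ) ^ (k + 1) *
      (partitionExt (n - pentagonal k) + partitionExt (n - pentagonal (-k))) := by
  set f := fun k : ℤ ↦ (k.negOnePow : ℤ) * partitionExt (n - pentagonal k)
  have hvanish : ∀ k ∉ insert 0 (Finset.Icc 1 n), f k + f (-k) = 0 := by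
    intro k hk
    have hnk : n < k := by simp at hk; omega
    have h₁ : k ≤ pentagonal k := by simpa using natAbs_le_pentagonal k
    have h₂ : k ≤ pentagonal (-k) := by simpa using natAbs_le_pentagonal (-k)
    simp only [f]
    rw [partitionExt_of_neg (by omega), partitionExt_of_neg (by omega)]
    simp
  have h := (hasSum_negOnePow_mul_partitionExt n).nat_add_neg.unique
    (hasSum_sum_of_ne_finset_zero hvanish)
  rw [Finset.sum_insert (by simp), if_neg hn] at h
  simp only [Int.negOnePow_neg, Int.coe_negOnePow_natCast, Int.negOnePow_zero, neg_zero,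
    Units.val_one, one_mul, show pentagonal 0 = 0 from rfl, Nat.cast_zero, sub_zero,
    ← mul_add] at h
  simp only [pow_succ, mul_neg_one, neg_mul, Finset.sum_neg_distrib]
  linarith

/-- Euler's recurrence for the partition function: for `n ≥ 1`,
`p(n) = Σ_{k≥1} (-1)^{k+1} [p(n - k(3k-1)/2) + p(n - k(3k+1)/2)]`, where `p(m) = 0`
for `m < 0`.  The terms with `k > n` vanish, so the sum may be taken over `1 ≤ k ≤ n`. -/
theorem euler_partition_recurrence (n : ℤ) (hn : 1 ≤ n) :
    partitionExt n =
      ∑ k ∈ Finset.Icc 1 n.toNat, (-1 : ℤ) ^ (k + 1) *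
        (partitionExt (n - (k * (3 * k - 1) / 2 : ℕ)) +
          partitionExt (n - (k * (3 * k + 1) / 2 : ℕ))) := by
  lift n to ℕ using by omega
  have h := partitionExt_eq_sum_pentagonal (n := n) (by omega)
  simp only [pentagonal_natCast, pentagonal_neg_natCast] at h
  rwa [Int.toNat_natCast]
end

section
/- Rademacher-type formula via duality: for 1 ≤ r ≤ 24 and n ≥ 1, p_r(n) = −c_{r/24}, where c_{r/24} is the coefficient of q^{r/24} in the Fourier expansion of the Poincaré series P_{2+r/2, −n+r/24}; explicitly, the constant term of P_{2+r/2,−n+r/24} · η^{−r} (a weight-2 unrestricted modular form on SL₂(ℤ)) is p_r(n) + c_{r/24} = 0. -/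
/-!
Integrate the weight-2 form `f = P·E` against `dτ` along the arc `τ = e^{iθ}`, `π/3 ≤ θ ≤ 2π/3`,
of the unit circle. The involution `τ ↦ -1/τ` maps the arc onto itself reversing orientation,
and the weight-2 law `f(-1/τ) = τ² f(τ)` makes `f(τ) dτ` invariant under it, so the integral
vanishes. On the other hand the endpoints of the arc differ by `1`, so `∫ q^m dτ` is `-1` for
`m = 0` and `0` otherwise; integrating the `q`-expansion of `f` term by term therefore gives
minus its constant term `p_r(n) + c_{r/24} p_r(0)`.
-/

open Complex Real

/-- The number of `r`-color partitions of `n`: multisets of pairs (part, color) with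
part a positive integer and color in `{1, …, r}`, whose parts sum to `n`. -/
noncomputable def colorPartitions (r n : ℕ) : ℕ :=
  Nat.card {m : Multiset (ℕ+ × Fin r) // (m.map fun p => (p.1 : ℕ)).sum = n}

open Set

local notation "𝕢" => Function.Periodic.qParam 1

theorem colorPartitions_zero (r : ℕ) : colorPartitions r 0 = 1 := by
  have h0 : ∀ m : Multiset (ℕ+ × Fin r), (m.map fun p => (p.1 : ℕ)).sum = 0 → m = 0 :=
    fun m hm => Multiset.eq_zero_of_forall_notMem fun x hx =>
      x.1.ne_zero (Multiset.sum_eq_zero_iff.mp hm _ (Multiset.mem_map_of_mem _ hx))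
  rw [colorPartitions, Nat.card_eq_one_iff_unique]
  exact ⟨⟨fun m m' => Subtype.ext ((h0 _ m.2).trans (h0 _ m'.2).symm)⟩, ⟨⟨0, by simp⟩⟩⟩

theorem qParam_one_zpow (m : ℤ) (τ : ℂ) : 𝕢 τ ^ m = cexp (2 * π * I * m * τ) := by
  rw [Function.Periodic.qParam, ← Complex.exp_int_mul]
  congr 1
  push_cast
  ring

theorem cexp_two_pi_I_intCast_add_mul (m : ℤ) (w τ : ℂ) :
    cexp (2 * π * I * (m + w) * τ) = 𝕢 τ ^ m * cexp (2 * π * I * w * τ) := by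
  rw [qParam_one_zpow, ← Complex.exp_add]
  ring_nf

theorem HasSum.qParam_pow_mul_cexp {a : ℕ → ℂ} {w τ S : ℂ}
    (h : HasSum (fun j => a j * cexp (2 * π * I * ((j : ℂ) + w) * τ)) S) :
    HasSum (fun j => a j * 𝕢 τ ^ j * cexp (2 * π * I * w * τ)) S :=
  h.congr_fun fun j => by
    simpa [mul_assoc] using congrArg (a j * ·) (cexp_two_pi_I_intCast_add_mul j w τ).symm

theorem circleMap_zero_one_pi_sub (θ : ℝ) : circleMap 0 1 (π - θ) = -1 / circleMap 0 1 θ := by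
  rw [circleMap_zero, circleMap_zero]
  push_cast
  rw [sub_mul, Complex.exp_sub, Complex.exp_pi_mul_I]
  ring

theorem circleMap_zero_one_two_pi_div_three :
    circleMap 0 1 (2 * π / 3) = circleMap 0 1 (π / 3) - 1 := by
  have h : 2 * π / 3 = π - π / 3 := by ring
  apply Complex.ext <;>
    simp [circleMap_zero_re, circleMap_zero_im, h, Real.cos_pi_sub, Real.cos_pi_div_three]
  norm_num

theorem half_le_im_circleMap {θ : ℝ} (hθ : θ ∈ Icc (π / 3) (2 * π / 3)) :
    1 / 2 ≤ (circleMap 0 1 θ).im := by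
  rw [circleMap_zero_im, one_mul, ← Real.sin_pi_div_six]
  rcases le_total θ (π / 2) with h | h
  · exact Real.sin_le_sin_of_le_of_le_pi_div_two (by linarith [pi_pos]) h (by linarith [hθ.1])
  · rw [← Real.sin_pi_sub θ]
    exact Real.sin_le_sin_of_le_of_le_pi_div_two (by linarith [pi_pos]) (by linarith)
      (by linarith [hθ.2])

theorem norm_qParam_circleMap_le {θ : ℝ} (hθ : θ ∈ Icc (π / 3) (2 * π / 3)) :
    ‖𝕢 (circleMap 0 1 θ)‖ ≤ rexp (-π) := by
  rw [Function.Periodic.norm_qParam, div_one, Real.exp_le_exp]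
  nlinarith [half_le_im_circleMap hθ, pi_pos]

theorem norm_qParam_circleMap_zpow_neg_le (n : ℕ) (θ : ℝ) :
    ‖𝕢 (circleMap 0 1 θ) ^ (-(n : ℤ))‖ ≤ (rexp (-(2 * π)) ^ n)⁻¹ := by
  rw [norm_zpow, zpow_neg, zpow_natCast]
  gcongr
  rw [Function.Periodic.norm_qParam, div_one, Real.exp_le_exp, circleMap_zero_im, one_mul]
  nlinarith [Real.sin_le_one θ, pi_pos]

theorem exists_norm_mul_pow_le {𝕜 : Type*} [NormedField 𝕜] {a : ℕ → 𝕜} {w : 𝕜} (hw : w ≠ 0)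
    (h : Summable fun ℓ => a ℓ * w ^ ℓ) (s : ℝ) :
    ∃ M, ∀ ℓ (z : 𝕜), ‖z‖ ≤ s → ‖a ℓ * z ^ ℓ‖ ≤ M * (s / ‖w‖) ^ ℓ := by
  obtain ⟨M, hM⟩ := h.tendsto_atTop_zero.norm.bddAbove_range
  refine ⟨M, fun ℓ z hz => ?_⟩
  have hw' : 0 < ‖w‖ := norm_pos_iff.mpr hw
  calc ‖a ℓ * z ^ ℓ‖ = ‖a ℓ * w ^ ℓ‖ * (‖z‖ / ‖w‖) ^ ℓ := by
        rw [norm_mul, norm_mul, norm_pow, norm_pow, div_pow, mul_assoc,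
          mul_div_cancel₀ _ (pow_ne_zero _ hw'.ne')]
    _ ≤ M * (s / ‖w‖) ^ ℓ := by
        gcongr
        · exact (norm_nonneg _).trans (hM ⟨ℓ, rfl⟩)
        · exact hM ⟨ℓ, rfl⟩

theorem exists_norm_mul_qParam_circleMap_pow_le {a : ℕ → ℂ}
    (h : Summable fun j => a j * 𝕢 (I / 4) ^ j) :
    ∃ M, ∀ j, ∀ θ ∈ Icc (π / 3) (2 * π / 3),
      ‖a j * 𝕢 (circleMap 0 1 θ) ^ j‖ ≤ M * rexp (-(π / 2)) ^ j := by
  obtain ⟨M, hM⟩ := exists_norm_mul_pow_le (Function.Periodic.qParam_ne_zero _) h (rexp (-π))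
  have hρ : rexp (-π) / ‖𝕢 (I / 4)‖ = rexp (-(π / 2)) := by
    rw [Function.Periodic.norm_qParam, ← Real.exp_sub]
    norm_num
    ring_nf
  exact ⟨M, fun j θ hθ => hρ ▸ hM j _ (norm_qParam_circleMap_le hθ)⟩

theorem integral_circleMap_eq_sub {G g : ℂ → ℂ} (hG : ∀ z, HasDerivAt G (g z) z)
    (hg : Continuous g) (c : ℂ) (R a b : ℝ) :
    ∫ θ in a..b, g (circleMap c R θ) * (circleMap 0 R θ * I) =
      G (circleMap c R b) - G (circleMap c R a) :=
  intervalIntegral.integral_eq_sub_of_hasDerivAt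
    (fun θ _ => (hG _).comp θ (hasDerivAt_circleMap c R θ))
    (((hg.comp (continuous_circleMap c R)).mul
      ((continuous_circleMap 0 R).mul continuous_const)).intervalIntegrable _ _)

theorem integral_qParam_zpow_circleMap (m : ℤ) :
    ∫ θ in π / 3..2 * π / 3, 𝕢 (circleMap 0 1 θ) ^ m * (circleMap 0 1 θ * I) =
      if m = 0 then -1 else 0 := by
  split_ifs with hm
  · subst hm
    simpa [circleMap_zero_one_two_pi_div_three] using
      integral_circleMap_eq_sub (G := id) (g := fun _ => 1) hasDerivAt_id continuous_const
        0 1 (π / 3) (2 * π / 3)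
  · set K : ℂ := 2 * π * I * m
    have hK : K ≠ 0 := by simp [K, hm, pi_ne_zero, I_ne_zero]
    have hG : ∀ z, HasDerivAt (fun z => cexp (K * z) / K) (𝕢 z ^ m) z := fun z => by
      refine (((hasDerivAt_id z).const_mul K).cexp.div_const K).congr_deriv ?_
      rw [qParam_one_zpow]
      field_simp
      simp [K]
    have hg : Continuous fun z => 𝕢 z ^ m := by
      simp only [qParam_one_zpow]
      fun_prop
    have hK1 : cexp K = 1 := by simpa [K, mul_comm] using Complex.exp_int_mul_two_pi_mul_I m
    rw [integral_circleMap_eq_sub hG hg, circleMap_zero_one_two_pi_div_three, mul_sub, mul_one,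
      Complex.exp_sub, hK1, div_one, sub_self]

theorem integral_circleMap_eq_zero_of_weight_two {g : ℂ → ℂ}
    (hg : ∀ τ : ℂ, 0 < τ.im → g (-1 / τ) = τ ^ 2 * g τ) :
    ∫ θ in π / 3..2 * π / 3, g (circleMap 0 1 θ) * (circleMap 0 1 θ * I) = 0 := by
  set F : ℝ → ℂ := fun θ => g (circleMap 0 1 θ) * (circleMap 0 1 θ * I)
  have hflip : EqOn (fun θ => F (π - θ)) (fun θ => -F θ) (uIcc (π / 3) (2 * π / 3)) := by
    intro θ hθ
    rw [uIcc_of_le (by linarith [pi_pos])] at hθ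
    have hτ : circleMap 0 1 θ ≠ 0 := by simp [circleMap_zero, Complex.exp_ne_zero]
    simp only [F, circleMap_zero_one_pi_sub, hg _ (by linarith [half_le_im_circleMap hθ])]
    field_simp
  have h := intervalIntegral.integral_comp_sub_left F π (a := π / 3) (b := 2 * π / 3)
  rw [intervalIntegral.integral_congr hflip, intervalIntegral.integral_neg,
    show π - 2 * π / 3 = π / 3 by ring, show π - π / 3 = 2 * π / 3 by ring] at h
  linear_combination -h / 2

theorem hasSum_integral_circleMap_of_hasSum {ι : Type*} [Countable ι] {f : ℂ → ℂ} {a : ι → ℂ}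
    {e : ι → ℤ} {u : ι → ℝ} (hu : Summable u)
    (hbound : ∀ i, ∀ θ ∈ Icc (π / 3) (2 * π / 3), ‖a i * 𝕢 (circleMap 0 1 θ) ^ e i‖ ≤ u i)
    (hf : ∀ θ ∈ Icc (π / 3) (2 * π / 3),
      HasSum (fun i => a i * 𝕢 (circleMap 0 1 θ) ^ e i) (f (circleMap 0 1 θ))) :
    HasSum (fun i => if e i = 0 then -a i else 0)
      (∫ θ in π / 3..2 * π / 3, f (circleMap 0 1 θ) * (circleMap 0 1 θ * I)) := by
  have hIoc : uIoc (π / 3) (2 * π / 3) ⊆ Icc (π / 3) (2 * π / 3) := by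
    rw [uIoc_of_le (by linarith [pi_pos])]
    exact Ioc_subset_Icc_self
  have hint := intervalIntegral.hasSum_integral_of_dominated_convergence
    (μ := MeasureTheory.volume)
    (F := fun i θ => a i * 𝕢 (circleMap 0 1 θ) ^ e i * (circleMap 0 1 θ * I))
    (fun i _ => u i) (fun i => by
      simp only [qParam_one_zpow]
      exact Continuous.aestronglyMeasurable (by fun_prop))
    (fun i => .of_forall fun θ hθ => by
      simpa [norm_circleMap_zero] using hbound i θ (hIoc hθ))
    (.of_forall fun _ _ => hu) intervalIntegrable_const
    (.of_forall fun θ hθ => (hf θ (hIoc hθ)).mul_right _)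
  have hterm : ∀ i, ∫ θ in π / 3..2 * π / 3,
      a i * 𝕢 (circleMap 0 1 θ) ^ e i * (circleMap 0 1 θ * I) = if e i = 0 then -a i else 0 :=
    fun i => by
      simp only [mul_assoc, intervalIntegral.integral_const_mul, integral_qParam_zpow_circleMap]
      split_ifs <;> simp
  simpa only [hterm] using hint

/-- Indexing of the expansion
`(q^{-n} + Σ_j a_j q^j) · Σ_ℓ b_ℓ q^ℓ = Σ_ℓ b_ℓ q^{ℓ-n} + Σ_{j,ℓ} a_j b_ℓ q^{j+ℓ}`. -/
def prodCoeff {R : Type*} [Mul R] (a b : ℕ → R) : ℕ ⊕ ℕ × ℕ → R :=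
  Sum.elim b fun x => a x.1 * b x.2

def prodExponent (n : ℕ) : ℕ ⊕ ℕ × ℕ → ℤ :=
  Sum.elim (fun ℓ => ℓ - n) fun x => (x.1 + x.2 : ℕ)

section Expansion

variable {𝕜 : Type*} [NormedField 𝕜] {a b : ℕ → 𝕜} {n : ℕ} {q : 𝕜}

theorem zpow_prodExponent_inl (hq : q ≠ 0) (ℓ : ℕ) :
    q ^ prodExponent n (.inl ℓ) = q ^ ℓ * q ^ (-(n : ℤ)) := by
  rw [prodExponent, Sum.elim_inl, sub_eq_add_neg, zpow_add₀ hq, zpow_natCast]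

theorem hasSum_prodCoeff_mul_zpow [CompleteSpace 𝕜] {φ ψ P E : 𝕜} (hq : q ≠ 0)
    (hφψ : φ * ψ = 1) (ha : Summable fun j => ‖a j * q ^ j‖)
    (hb : Summable fun ℓ => ‖b ℓ * q ^ ℓ‖)
    (hP : HasSum (fun j => a j * q ^ j * φ) (P - q ^ (-(n : ℤ)) * φ))
    (hE : HasSum (fun ℓ => b ℓ * q ^ ℓ * ψ) E) :
    HasSum (fun i => prodCoeff a b i * q ^ prodExponent n i) (P * E) := by
  have hlead : HasSum (fun ℓ => prodCoeff a b (.inl ℓ) * q ^ prodExponent n (.inl ℓ))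
      (q ^ (-(n : ℤ)) * φ * E) := by
    refine (hE.mul_left (q ^ (-(n : ℤ)) * φ)).congr_fun fun ℓ => ?_
    rw [zpow_prodExponent_inl hq, prodCoeff, Sum.elim_inl]
    linear_combination (-(b ℓ * q ^ ℓ * q ^ (-(n : ℤ)))) * hφψ
  have hnorm : Summable fun x : ℕ × ℕ => ‖a x.1 * q ^ x.1 * φ * (b x.2 * q ^ x.2 * ψ)‖ := by
    refine Summable.mul_norm (f := fun j => a j * q ^ j * φ) (g := fun ℓ => b ℓ * q ^ ℓ * ψ)
      ?_ ?_
    · simpa only [norm_mul] using ha.mul_right ‖φ‖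
    · simpa only [norm_mul] using hb.mul_right ‖ψ‖
  have htail : HasSum (fun x => prodCoeff a b (.inr x) * q ^ prodExponent n (.inr x))
      ((P - q ^ (-(n : ℤ)) * φ) * E) := by
    refine (hP.mul hE hnorm.of_norm).congr_fun fun x => ?_
    simp only [prodCoeff, prodExponent, Sum.elim_inr, zpow_natCast, pow_add]
    linear_combination (-(a x.1 * b x.2 * q ^ x.1 * q ^ x.2)) * hφψ
  have := HasSum.sum (f := fun i => prodCoeff a b i * q ^ prodExponent n i) hlead htail
  rwa [← add_mul, add_sub_cancel] at this

theorem hasSum_ite_prodExponent_eq_zero (a b : ℕ → 𝕜) (n : ℕ) :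
    HasSum (fun i => if prodExponent n i = 0 then -prodCoeff a b i else 0)
      (-(b n + a 0 * b 0)) := by
  rw [neg_add]
  refine HasSum.sum ?_ ?_
  · refine (hasSum_ite_eq n (-b n)).congr_fun fun ℓ => ?_
    by_cases h : ℓ = n <;> simp [prodExponent, prodCoeff, sub_eq_zero, h]
  · refine (hasSum_ite_eq (0, 0) (-(a 0 * b 0))).congr_fun fun ⟨j, ℓ⟩ => ?_
    simp only [Function.comp_apply, prodExponent, prodCoeff, Sum.elim_inr, Nat.cast_eq_zero,
      Nat.add_eq_zero_iff, Prod.mk.injEq]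
    split_ifs with h
    · rw [h.1, h.2]
    · rfl

theorem norm_prodCoeff_mul_zpow_le {Ma Mb ρ K : ℝ} (hq : q ≠ 0)
    (ha : ∀ j, ‖a j * q ^ j‖ ≤ Ma * ρ ^ j) (hb : ∀ ℓ, ‖b ℓ * q ^ ℓ‖ ≤ Mb * ρ ^ ℓ)
    (hK : ‖q ^ (-(n : ℤ))‖ ≤ K) (i : ℕ ⊕ ℕ × ℕ) :
    ‖prodCoeff a b i * q ^ prodExponent n i‖ ≤
      Sum.elim (fun ℓ => Mb * ρ ^ ℓ * K) (fun x => Ma * ρ ^ x.1 * (Mb * ρ ^ x.2)) i := by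
  rcases i with ℓ | ⟨j, ℓ⟩
  · rw [zpow_prodExponent_inl hq, ← mul_assoc, norm_mul]
    exact mul_le_mul (hb ℓ) hK (norm_nonneg _) ((norm_nonneg _).trans (hb ℓ))
  · simp only [prodCoeff, prodExponent, Sum.elim_inr, zpow_natCast, pow_add]
    rw [show a j * b ℓ * (q ^ j * q ^ ℓ) = a j * q ^ j * (b ℓ * q ^ ℓ) by ring, norm_mul]
    exact mul_le_mul (ha j) (hb ℓ) (norm_nonneg _) ((norm_nonneg _).trans (ha j))

end Expansion

theorem summable_sumElim_geometric {Ma Mb ρ K : ℝ} (hρ₀ : 0 ≤ ρ) (hρ₁ : ρ < 1) :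
    Summable (Sum.elim (fun ℓ => Mb * ρ ^ ℓ * K)
      (fun x : ℕ × ℕ => Ma * ρ ^ x.1 * (Mb * ρ ^ x.2))) := by
  have hgeo := summable_geometric_of_lt_one hρ₀ hρ₁
  have hnorm : ∀ M : ℝ, Summable fun j : ℕ => ‖M * ρ ^ j‖ := fun M =>
    summable_norm_iff.mpr (hgeo.mul_left M)
  exact HasSum.summable <| HasSum.sum (f := Sum.elim _ _)
    ((hgeo.mul_left Mb).mul_right K).hasSum
    (summable_mul_of_summable_norm (f := fun j => Ma * ρ ^ j) (g := fun j => Mb * ρ ^ j)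
      (hnorm Ma) (hnorm Mb)).hasSum

theorem integral_circleMap_mul_eq_neg_constantTerm {a b : ℕ → ℂ} {n : ℕ} {P E φ ψ : ℂ → ℂ}
    (hφψ : ∀ τ, φ τ * ψ τ = 1)
    (hP : ∀ τ : ℂ, 0 < τ.im →
      HasSum (fun j => a j * 𝕢 τ ^ j * φ τ) (P τ - 𝕢 τ ^ (-(n : ℤ)) * φ τ))
    (hE : ∀ τ : ℂ, 0 < τ.im → HasSum (fun ℓ => b ℓ * 𝕢 τ ^ ℓ * ψ τ) (E τ)) :
    ∫ θ in π / 3..2 * π / 3, P (circleMap 0 1 θ) * E (circleMap 0 1 θ) * (circleMap 0 1 θ * I) =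
      -(b n + a 0 * b 0) := by
  have hI4 : 0 < (I / 4 : ℂ).im := by norm_num
  obtain ⟨Ma, hMa⟩ := exists_norm_mul_qParam_circleMap_pow_le
    ((summable_mul_right_iff (left_ne_zero_of_mul_eq_one (hφψ _))).mp (hP _ hI4).summable)
  obtain ⟨Mb, hMb⟩ := exists_norm_mul_qParam_circleMap_pow_le
    ((summable_mul_right_iff (right_ne_zero_of_mul_eq_one (hφψ _))).mp (hE _ hI4).summable)
  have hρ₀ : 0 ≤ rexp (-(π / 2)) := (Real.exp_pos _).le
  have hρ₁ : rexp (-(π / 2)) < 1 := Real.exp_lt_one_iff.mpr (by linarith [pi_pos])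
  have hgeo := summable_geometric_of_lt_one hρ₀ hρ₁
  have hexp : ∀ θ ∈ Icc (π / 3) (2 * π / 3),
      HasSum (fun i => prodCoeff a b i * 𝕢 (circleMap 0 1 θ) ^ prodExponent n i)
        (P (circleMap 0 1 θ) * E (circleMap 0 1 θ)) := fun θ hθ => by
    have hτ : 0 < (circleMap 0 1 θ).im := by linarith [half_le_im_circleMap hθ]
    exact hasSum_prodCoeff_mul_zpow (Function.Periodic.qParam_ne_zero _) (hφψ _)
      (.of_nonneg_of_le (fun _ => norm_nonneg _) (hMa · θ hθ) (hgeo.mul_left Ma))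
      (.of_nonneg_of_le (fun _ => norm_nonneg _) (hMb · θ hθ) (hgeo.mul_left Mb))
      (hP _ hτ) (hE _ hτ)
  refine HasSum.unique ?_ (hasSum_ite_prodExponent_eq_zero a b n)
  exact hasSum_integral_circleMap_of_hasSum (f := fun τ => P τ * E τ)
    (summable_sumElim_geometric hρ₀ hρ₁)
    (fun i θ hθ => norm_prodCoeff_mul_zpow_le (Function.Periodic.qParam_ne_zero _)
      (hMa · θ hθ) (hMb · θ hθ) (norm_qParam_circleMap_zpow_neg_le n θ) i) hexp

theorem rademacher_colored_partitions_general
    (r n : ℕ)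
    (P E : ℂ → ℂ) (c : ℕ → ℂ)
    (hP : ∀ τ : ℂ, 0 < τ.im →
      HasSum (fun j : ℕ =>
          c (n + j) * Complex.exp (2 * π * Complex.I * ((j : ℂ) + r / 24) * τ))
        (P τ - Complex.exp (2 * π * Complex.I * (-(n : ℂ) + r / 24) * τ)))
    (hE : ∀ τ : ℂ, 0 < τ.im →
      HasSum (fun ℓ : ℕ =>
          (colorPartitions r ℓ : ℂ) * Complex.exp (2 * π * Complex.I * ((ℓ : ℂ) - r / 24) * τ))
        (E τ))
    (hmod : ∀ τ : ℂ, 0 < τ.im →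
      P (-1 / τ) * E (-1 / τ) = τ ^ 2 * (P τ * E τ)) :
    (colorPartitions r n : ℂ) = -c n := by
  -- The fractional exponents `±r/24` of the two expansions cancel in the product.
  set φ : ℂ → ℂ := fun τ => cexp (2 * π * I * (r / 24) * τ) with hφ
  set ψ : ℂ → ℂ := fun τ => cexp (2 * π * I * (-(r / 24)) * τ) with hψ
  have hφψ : ∀ τ, φ τ * ψ τ = 1 := fun τ => by
    rw [hφ, hψ, ← Complex.exp_add, ← Complex.exp_zero]
    ring_nf
  have hP' : ∀ τ : ℂ, 0 < τ.im →
      HasSum (fun j => c (n + j) * 𝕢 τ ^ j * φ τ) (P τ - 𝕢 τ ^ (-(n : ℤ)) * φ τ) :=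
    fun τ hτ => by
      rw [hφ, ← cexp_two_pi_I_intCast_add_mul]
      simpa using (hP τ hτ).qParam_pow_mul_cexp
  have hE' : ∀ τ : ℂ, 0 < τ.im →
      HasSum (fun ℓ => (colorPartitions r ℓ : ℂ) * 𝕢 τ ^ ℓ * ψ τ) (E τ) := fun τ hτ => by
    have h := hE τ hτ
    simp only [sub_eq_add_neg] at h
    exact h.qParam_pow_mul_cexp
  have h := integral_circleMap_mul_eq_neg_constantTerm hφψ hP' hE'
  rw [integral_circleMap_eq_zero_of_weight_two (g := fun τ => P τ * E τ) hmod,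
    add_zero, colorPartitions_zero, Nat.cast_one, mul_one] at h
  linear_combination h

/-- Rademacher-type formula via duality.  Let `1 ≤ r ≤ 24` and `n ≥ 1`.  Suppose
`P` is the Poincaré series `P_{2+r/2, −n+r/24}` in the sense that it has the Fourier
expansion `P(τ) = q^{−n+r/24} + Σ_{j≥n} c_j q^{j−n+r/24}` (so `c n` is the coefficient
`c_{r/24}` of `q^{r/24}`), `E = η^{−r}` has the expansion
`E(τ) = q^{−r/24} Σ_{ℓ≥0} p_r(ℓ) q^ℓ`, both are holomorphic on the upper half-plane,
and the product `P·E` is an unrestricted weight-2 modular form with trivial multiplier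
(it satisfies the weight-2 inversion law; periodicity follows from the expansions).
Then the constant term `p_r(n) + c_{r/24}` of `P·E` vanishes: `p_r(n) = −c_{r/24}`. -/
theorem rademacher_colored_partitions
    (r n : ℕ) (hr1 : 1 ≤ r) (hr24 : r ≤ 24) (hn : 1 ≤ n)
    (P E : ℂ → ℂ) (c : ℕ → ℂ)
    (hPhol : DifferentiableOn ℂ P {τ : ℂ | 0 < τ.im})
    (hEhol : DifferentiableOn ℂ E {τ : ℂ | 0 < τ.im})
    (hP : ∀ τ : ℂ, 0 < τ.im →
      HasSum (fun j : ℕ =>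
          c (n + j) * Complex.exp (2 * π * Complex.I * ((j : ℂ) + r / 24) * τ))
        (P τ - Complex.exp (2 * π * Complex.I * (-(n : ℂ) + r / 24) * τ)))
    (hE : ∀ τ : ℂ, 0 < τ.im →
      HasSum (fun ℓ : ℕ =>
          (colorPartitions r ℓ : ℂ) * Complex.exp (2 * π * Complex.I * ((ℓ : ℂ) - r / 24) * τ))
        (E τ))
    (hmod : ∀ τ : ℂ, 0 < τ.im →
      P (-1 / τ) * E (-1 / τ) = τ ^ 2 * (P τ * E τ)) :
    (colorPartitions r n : ℂ) = -c n :=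
  rademacher_colored_partitions_general r n P E c hP hE hmod
end
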